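/- Let F be a field and n ≥ 3. If N₁, N₂ ∈ M_n(F) are two nonzero nilpotent matrices, both of nilpotency index 2 (i.e., N_i ≠ 0 and N_i² = 0), then the distance between N₁ and N₂ in the commuting graph Γ(M_n(F)) is at most 2. -/

import Mathlib

/-!
If `N₁` and `N₂` commute they are equal or adjacent. Otherwise `S = N₁N₂ + N₂N₁` commutes with
both, and is a middle vertex unless it is a scalar `c`. If `c = 0`, the nonzero square-zero matrix
`N₁N₂` commutes with both. If `c ≠ 0`, put `a = c⁻¹N₁` and `b = N₂`, so that `ab + ba = 1` and
`e = ab` is idempotent. Every `exe + bxa` commutes with `a` and `b`, and `e (exe + bxa) e = exe`.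
Since `a = ea`, `n = rank (ab + ba) ≤ rank e + rank a ≤ 2 rank e`, so `rank e ≥ 2` for `n ≥ 3`;
hence some `exe` (with `x` of rank one) is not a multiple of `e`, and then `exe + bxa` is
noncentral.
-/
/-- A matrix is noncentral iff it is not a scalar multiple of the identity. -/
def Matrix.IsNoncentral {F : Type*} [Field F] {n : ℕ} (A : Matrix (Fin n) (Fin n) F) : Prop :=
  ∀ c : F, A ≠ c • (1 : Matrix (Fin n) (Fin n) F)

/-- The commuting graph of the matrix ring `M_n(F)`: vertices are the noncentral
matrices, and two distinct vertices are adjacent iff they commute. -/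
def commutingGraph (F : Type*) [Field F] (n : ℕ) :
    SimpleGraph {A : Matrix (Fin n) (Fin n) F // A.IsNoncentral} where
  Adj A B := A ≠ B ∧ A.val * B.val = B.val * A.val
  symm := ⟨fun A B h => ⟨h.1.symm, h.2.symm⟩⟩
  loopless := ⟨fun A h => h.1 rfl⟩

section SquareZero

variable {R : Type*} [Ring R] {a b : R}

theorem commute_mul_add_mul_of_mul_self_eq_zero (ha : a * a = 0) (b : R) :
    Commute a (a * b + b * a) := by
  simp only [Commute, SemiconjBy, mul_add, add_mul, ← mul_assoc, ha, zero_mul, zero_add]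
  simp only [mul_assoc, ha, mul_zero, add_zero]

section Anticommute

variable (hab : a * b + b * a = 0)
include hab

theorem mul_mul_self_eq_zero_of_anticommute (ha : a * a = 0) : a * b * (a * b) = 0 := by
  rw [mul_assoc, ← mul_assoc b, eq_neg_of_add_eq_zero_right hab]
  simp [← mul_assoc, ha]

theorem commute_left_mul_of_anticommute (ha : a * a = 0) : Commute a (a * b) := by
  rw [Commute, SemiconjBy, ← mul_assoc, ha, mul_assoc, eq_neg_of_add_eq_zero_right hab]
  simp [← mul_assoc, ha]

theorem commute_right_mul_of_anticommute (hb : b * b = 0) : Commute b (a * b) := by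
  rw [Commute, SemiconjBy, ← mul_assoc, eq_neg_of_add_eq_zero_right hab, mul_assoc a, hb]
  simp [mul_assoc, hb]

end Anticommute

section Normalized

variable (hab : a * b + b * a = 1)
include hab

theorem mul_mul_eq_left_of_anticommute_eq_one (ha : a * a = 0) : a * b * a = a := by
  rw [mul_assoc, eq_sub_of_add_eq' hab, mul_sub, mul_one, ← mul_assoc, ha, zero_mul, sub_zero]

theorem mul_mul_eq_right_of_anticommute_eq_one (hb : b * b = 0) : b * a * b = b := by
  rw [eq_sub_of_add_eq' hab, sub_mul, one_mul, mul_assoc, hb, mul_zero, sub_zero]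

theorem commute_left_corner (ha : a * a = 0) (x : R) :
    Commute a (a * b * x * (a * b) + b * x * a) := by
  have haa (y : R) : a * (a * y) = 0 := by rw [← mul_assoc, ha, zero_mul]
  have haba : a * (b * a) = a := by
    rw [← mul_assoc, mul_mul_eq_left_of_anticommute_eq_one hab ha]
  simp only [Commute, SemiconjBy, mul_add, add_mul, mul_assoc, haa, haba, ha, mul_zero, zero_add,
    add_zero]

theorem commute_right_corner (hb : b * b = 0) (x : R) :
    Commute b (a * b * x * (a * b) + b * x * a) := by
  have hbb (y : R) : b * (b * y) = 0 := by rw [← mul_assoc, hb, zero_mul]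
  have hbab (y : R) : b * (a * (b * y)) = b * y := by
    rw [← mul_assoc, ← mul_assoc, mul_mul_eq_right_of_anticommute_eq_one hab hb]
  simp only [Commute, SemiconjBy, mul_add, add_mul, mul_assoc, hbb, hbab, hb, mul_zero, zero_add,
    add_zero]

theorem mul_corner_mul (hb : b * b = 0) (x : R) :
    a * b * (a * b * x * (a * b) + b * x * a) * (a * b) = a * b * x * (a * b) := by
  have hbb (y : R) : b * (b * y) = 0 := by rw [← mul_assoc, hb, zero_mul]
  have hbab (y : R) : b * (a * (b * y)) = b * y := by
    rw [← mul_assoc, ← mul_assoc, mul_mul_eq_right_of_anticommute_eq_one hab hb]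
  have hbab' : b * (a * b) = b := by
    rw [← mul_assoc, mul_mul_eq_right_of_anticommute_eq_one hab hb]
  simp only [mul_add, mul_assoc, hbb, hbab, hbab', mul_zero, add_zero]

end Normalized

end SquareZero

namespace Matrix

variable {l m K : Type*} [Fintype m] [Field K]

theorem rank_add_le (A B : Matrix l m K) : (A + B).rank ≤ A.rank + B.rank := by
  rw [rank, rank, rank, mulVecLin_add]
  exact (Submodule.finrank_mono (LinearMap.range_add_le _ _)).trans
    (Submodule.finrank_add_le_finrank_add_finrank _ _)

theorem card_le_two_mul_rank_of_anticommute_eq_one [DecidableEq m] {A B : Matrix m m K}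
    (hA : A * A = 0) (hAB : A * B + B * A = 1) : Fintype.card m ≤ 2 * (A * B).rank :=
  calc Fintype.card m = (A * B + B * A).rank := by rw [hAB, rank_one]
    _ ≤ (A * B).rank + (B * A).rank := rank_add_le _ _
    _ ≤ (A * B).rank + (A * B * A).rank := by
      rw [mul_mul_eq_left_of_anticommute_eq_one hAB hA]; gcongr; exact rank_mul_le_right _ _
    _ ≤ 2 * (A * B).rank := by rw [two_mul]; gcongr; exact rank_mul_le_left _ _

theorem exists_mul_mul_ne_smul [DecidableEq m] {P : Matrix m m K} (hP : 2 ≤ P.rank) :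
    ∃ X : Matrix m m K, ∀ μ : K, P * X * P ≠ μ • P := by
  obtain ⟨i, j, hij⟩ : ∃ i j, P i j ≠ 0 := by
    by_contra! h
    rw [show P = 0 from ext h, rank_zero] at hP
    omega
  refine ⟨vecMulVec (Pi.single j 1) (Pi.single i 1), fun μ hμ => ?_⟩
  have hPXP :
      P * vecMulVec (Pi.single j 1) (Pi.single i 1) * P = vecMulVec (P.col j) (P.row i) := by
    rw [mul_vecMulVec, vecMulVec_mul, mulVec_single_one, single_one_vecMul]
  have hμ0 : μ ≠ 0 := by
    rintro rfl
    have := congrFun₂ (hPXP.symm.trans hμ) i j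
    simp [vecMulVec_apply, hij] at this
  have := rank_vecMulVec_le (P.col j) (P.row i)
  rw [← hPXP, hμ, rank_smul_of_mem_nonZeroDivisors _ (mem_nonZeroDivisors_of_ne_zero hμ0)] at this
  omega

end Matrix

section Commuting

variable {F : Type*} [Field F] {n : ℕ}

theorem Matrix.isNoncentral_of_mul_self_eq_zero {N : Matrix (Fin n) (Fin n) F} (hN : N ≠ 0)
    (hNN : N * N = 0) : N.IsNoncentral := by
  rintro μ rfl
  rw [smul_mul_smul, one_mul, smul_eq_zero] at hNN
  rcases hNN with hμ | h1
  · exact hN (by rw [mul_self_eq_zero.mp hμ, zero_smul])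
  · exact hN (by rw [h1, smul_zero])

theorem Matrix.exists_isNoncentral_commute_of_mul_self_eq_zero (hn : 3 ≤ n)
    {A B : Matrix (Fin n) (Fin n) F} (hA : A * A = 0) (hB : B * B = 0) (hAB : ¬Commute A B) :
    ∃ M : Matrix (Fin n) (Fin n) F, M.IsNoncentral ∧ Commute A M ∧ Commute B M := by
  by_cases hS : (A * B + B * A).IsNoncentral
  · refine ⟨_, hS, commute_mul_add_mul_of_mul_self_eq_zero hA B, ?_⟩
    rw [add_comm]
    exact commute_mul_add_mul_of_mul_self_eq_zero hB A
  obtain ⟨c, hc⟩ : ∃ c : F, A * B + B * A = c • 1 := by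
    simpa [IsNoncentral] using hS
  rcases eq_or_ne c 0 with rfl | hc0
  · rw [zero_smul] at hc
    have hAB0 : A * B ≠ 0 := fun h => hAB <| by
      rw [Commute, SemiconjBy, eq_neg_of_add_eq_zero_right hc, h, neg_zero]
    exact ⟨A * B, isNoncentral_of_mul_self_eq_zero hAB0 (mul_mul_self_eq_zero_of_anticommute hc hA),
      commute_left_mul_of_anticommute hc hA, commute_right_mul_of_anticommute hc hB⟩
  set a := c⁻¹ • A with ha_def
  have ha : a * a = 0 := by rw [ha_def, smul_mul_smul, hA, smul_zero]
  have haB : a * B + B * a = 1 := by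
    rw [ha_def, smul_mul_assoc, mul_smul_comm, ← smul_add, hc, smul_smul, inv_mul_cancel₀ hc0,
      one_smul]
  have hrank : 2 ≤ (a * B).rank := by
    have := card_le_two_mul_rank_of_anticommute_eq_one ha haB
    rw [Fintype.card_fin] at this
    omega
  obtain ⟨X, hX⟩ := exists_mul_mul_ne_smul hrank
  refine ⟨a * B * X * (a * B) + B * X * a, fun μ hμ => hX μ ?_, ?_, commute_right_corner haB hB X⟩
  · rw [← mul_corner_mul haB hB X, hμ, mul_smul_comm, mul_one, smul_mul_assoc,
      ← mul_assoc, mul_mul_eq_left_of_anticommute_eq_one haB ha]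
  · simpa [ha_def, smul_smul, mul_inv_cancel₀ hc0] using (commute_left_corner haB ha X).smul_left c

namespace commutingGraph

theorem edist_le_one_of_commute {A B : {A : Matrix (Fin n) (Fin n) F // A.IsNoncentral}}
    (h : Commute A.val B.val) : (commutingGraph F n).edist A B ≤ 1 := by
  rcases eq_or_ne A B with rfl | hne
  · simp
  · have hadj : (commutingGraph F n).Adj A B := ⟨hne, h⟩
    exact (SimpleGraph.edist_eq_one_iff_adj.mpr hadj).le

theorem edist_le_two_of_commute {A B M : {A : Matrix (Fin n) (Fin n) F // A.IsNoncentral}}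
    (hA : Commute A.val M.val) (hB : Commute M.val B.val) : (commutingGraph F n).edist A B ≤ 2 :=
  calc (commutingGraph F n).edist A B
      ≤ (commutingGraph F n).edist A M + (commutingGraph F n).edist M B :=
        SimpleGraph.edist_triangle
    _ ≤ 1 + 1 := add_le_add (edist_le_one_of_commute hA) (edist_le_one_of_commute hB)
    _ = 2 := one_add_one_eq_two

end commutingGraph

end Commuting

theorem edist_le_two_of_squareZero_general
    (F : Type*) [Field F] (n : ℕ) (hn : 3 ≤ n)
    (N₁ N₂ : Matrix (Fin n) (Fin n) F)
    (hN₁sq : N₁ ^ 2 = 0) (hN₂sq : N₂ ^ 2 = 0)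
    (h₁ : N₁.IsNoncentral) (h₂ : N₂.IsNoncentral) :
    (commutingGraph F n).edist ⟨N₁, h₁⟩ ⟨N₂, h₂⟩ ≤ 2 := by
  by_cases hcomm : Commute N₁ N₂
  · exact (commutingGraph.edist_le_one_of_commute hcomm).trans one_le_two
  rw [sq] at hN₁sq hN₂sq
  obtain ⟨M, hM, h₁M, h₂M⟩ :=
    Matrix.exists_isNoncentral_commute_of_mul_self_eq_zero hn hN₁sq hN₂sq hcomm
  exact commutingGraph.edist_le_two_of_commute (M := ⟨M, hM⟩) h₁M h₂M.symm

/-- Two nonzero nilpotent matrices of index 2 are at distance at most 2 in the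
commuting graph. -/
theorem edist_le_two_of_squareZero
    (F : Type*) [Field F] (n : ℕ) (hn : 3 ≤ n)
    (N₁ N₂ : Matrix (Fin n) (Fin n) F)
    (hN₁ : N₁ ≠ 0) (hN₂ : N₂ ≠ 0) (hN₁sq : N₁ ^ 2 = 0) (hN₂sq : N₂ ^ 2 = 0)
    (h₁ : N₁.IsNoncentral) (h₂ : N₂.IsNoncentral) :
    (commutingGraph F n).edist ⟨N₁, h₁⟩ ⟨N₂, h₂⟩ ≤ 2 :=
  edist_le_two_of_squareZero_general F n hn N₁ N₂ hN₁sq hN₂sq h₁ h₂
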